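/- Let s ∈ {0,1}^N be a sampling pattern with m = ‖s‖₀ ones and support S, 0 < m < N, on a connected weighted graph. Then vol(S) ≥ m²(1 − m/N)² / (Σ_{ℓ=2}^N ŝ(ℓ)²/μ_ℓ), where ŝ = Uᵀs and vol(S) = Σ_{u∈S} D(u,u). -/
import Mathlib


open Finset Matrix

/-- Volume lower bound (Lemma): for a binary sampling pattern `s` with support `S` and
`m` ones, `vol(S) ≥ m²(1-m/N)² / (∑_{ℓ≥2} ŝ(ℓ)²/μ_ℓ)`, where `vol(S) = ∑_{u∈S} D(u,u)`. -/
theorem stmt_6 {N : ℕ} (hN : 2 ≤ N)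
    (W : Matrix (Fin N) (Fin N) ℝ)
    (hWsymm : W.IsSymm)
    (hWnonneg : ∀ u v, 0 ≤ W u v)
    (hWdiag : ∀ u, W u u = 0)
    (L : Matrix (Fin N) (Fin N) ℝ)
    (hL : L = Matrix.diagonal (fun u => ∑ v, W u v) - W)
    (μ : Fin N → ℝ) (U : Matrix (Fin N) (Fin N) ℝ)
    (hU : Uᵀ * U = 1)
    (hμmono : Monotone μ)
    (hμ0 : μ (⟨0, by omega⟩ : Fin N) = 0)
    (hμ2 : 0 < μ (⟨1, by omega⟩ : Fin N))
    (hU0 : ∀ i, U i (⟨0, by omega⟩ : Fin N) = 1 / Real.sqrt N)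
    (heig : ∀ ℓ, L.mulVec (fun i => U i ℓ) = μ ℓ • (fun i => U i ℓ))
    (S : Finset (Fin N)) (s : Fin N → ℝ)
    (hs : ∀ v, s v = if v ∈ S then 1 else 0)
    (m : ℕ) (hm : m = S.card) (hm0 : 0 < m) (hmN : m < N) :
    (∑ u ∈ S, ∑ v, W u v) ≥
      (m : ℝ) ^ 2 * (1 - (m : ℝ) / N) ^ 2 /
        (∑ ℓ ∈ Finset.univ.erase (⟨0, by omega⟩ : Fin N), ((Uᵀ.mulVec s) ℓ) ^ 2 / μ ℓ) := by
  have hN0 : (0 : ℝ) < N := by positivity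
  set e0 : Fin N := ⟨0, by omega⟩ with he0
  set e1 : Fin N := ⟨1, by omega⟩ with he1
  set c : Fin N → ℝ := Uᵀ.mulVec s with hcdef
  have hc : ∀ ℓ, c ℓ = ∑ i, U i ℓ * s i := by
    intro ℓ
    simp [hcdef, Matrix.mulVec, dotProduct, Matrix.transpose_apply]
  -- orthonormality facts
  have hUUT : U * Uᵀ = 1 := mul_eq_one_comm.mp hU
  have hdelta : ∀ i j, (∑ ℓ, U i ℓ * U j ℓ) = if i = j then (1:ℝ) else 0 := by
    intro i j
    have := congrFun (congrFun hUUT i) j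
    simpa [Matrix.mul_apply, Matrix.transpose_apply, Matrix.one_apply] using this
  -- s has 0/1 entries
  have hs01 : ∀ i, s i * s i = s i := by
    intro i; rw [hs i]; by_cases h : i ∈ S <;> simp [h]
  have hsum_s : (∑ i, s i) = (m : ℝ) := by
    rw [hm]
    simp only [hs]
    rw [Finset.sum_ite_mem, Finset.univ_inter]
    simp
  -- expansion of s in the eigenbasis
  have hs_expand : ∀ i, (∑ ℓ, c ℓ * U i ℓ) = s i := by
    intro i
    calc (∑ ℓ, c ℓ * U i ℓ) = ∑ ℓ, ∑ j, U j ℓ * s j * U i ℓ := by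
          simp only [hc, Finset.sum_mul]
      _ = ∑ j, (∑ ℓ, U i ℓ * U j ℓ) * s j := by
          rw [Finset.sum_comm]
          congr 1; ext j
          rw [Finset.sum_mul]
          congr 1; ext ℓ; ring
      _ = ∑ j, (if i = j then (1:ℝ) else 0) * s j := by
          simp only [hdelta]
      _ = s i := by simp
  -- quadratic form equals spectral sum
  have heig' : ∀ ℓ i, (∑ j, L i j * U j ℓ) = μ ℓ * U i ℓ := by
    intro ℓ i
    have := congrFun (heig ℓ) i
    simpa [Matrix.mulVec, dotProduct] using this
  have hQF : (∑ i, s i * (L.mulVec s) i) = ∑ ℓ, μ ℓ * c ℓ ^ 2 := by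
    have hmv : ∀ i, (L.mulVec s) i = ∑ ℓ, c ℓ * (μ ℓ * U i ℓ) := by
      intro i
      have : (L.mulVec s) i = ∑ j, L i j * s j := by
        simp [Matrix.mulVec, dotProduct]
      rw [this]
      calc (∑ j, L i j * s j) = ∑ j, L i j * ∑ ℓ, c ℓ * U j ℓ := by
            simp only [hs_expand]
        _ = ∑ j, ∑ ℓ, c ℓ * (L i j * U j ℓ) := by
            congr 1; ext j; rw [Finset.mul_sum]; congr 1; ext ℓ; ring
        _ = ∑ ℓ, c ℓ * ∑ j, L i j * U j ℓ := by
            rw [Finset.sum_comm]; congr 1; ext ℓ; rw [Finset.mul_sum]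
        _ = ∑ ℓ, c ℓ * (μ ℓ * U i ℓ) := by simp only [heig']
    calc (∑ i, s i * (L.mulVec s) i)
        = ∑ i, ∑ ℓ, μ ℓ * c ℓ * (U i ℓ * s i) := by
          congr 1; ext i; rw [hmv i, Finset.mul_sum]; congr 1; ext ℓ; ring
      _ = ∑ ℓ, μ ℓ * c ℓ * ∑ i, U i ℓ * s i := by
          rw [Finset.sum_comm]; congr 1; ext ℓ; rw [Finset.mul_sum]
      _ = ∑ ℓ, μ ℓ * c ℓ ^ 2 := by
          congr 1; ext ℓ; rw [← hc ℓ]; ring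
  -- quadratic form is at most the volume
  have hQF_le : (∑ i, s i * (L.mulVec s) i) ≤ ∑ u ∈ S, ∑ v, W u v := by
    have hexp : (∑ i, s i * (L.mulVec s) i)
        = (∑ u ∈ S, ∑ v, W u v) - ∑ u ∈ S, ∑ v ∈ S, W u v := by
      have hmv : ∀ i, (L.mulVec s) i = (∑ v, W i v) * s i - ∑ j, W i j * s j := by
        intro i
        simp [hL, Matrix.mulVec, dotProduct, Matrix.sub_apply, Matrix.diagonal_apply,
          sub_mul, Finset.sum_sub_distrib]
      have hsW : ∀ (f : Fin N → ℝ), (∑ i, s i * f i) = ∑ i ∈ S, f i := by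
        intro f
        simp only [hs, ite_mul, one_mul, zero_mul]
        rw [Finset.sum_ite_mem, Finset.univ_inter]
      calc (∑ i, s i * (L.mulVec s) i)
          = ∑ i, s i * ((∑ v, W i v) * s i - ∑ j, W i j * s j) := by
            simp only [hmv]
        _ = ∑ i, (s i * s i * (∑ v, W i v) - s i * ∑ j, W i j * s j) := by
            congr 1; ext i; ring
        _ = ∑ i, (s i * (∑ v, W i v)) - ∑ i, s i * ∑ j, W i j * s j := by
            rw [Finset.sum_sub_distrib]; congr 1; congr 1; ext i; rw [hs01 i]
        _ = (∑ u ∈ S, ∑ v, W u v) - ∑ u ∈ S, ∑ v ∈ S, W u v := by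
            rw [hsW (fun i => ∑ v, W i v)]
            congr 1
            rw [hsW (fun i => ∑ j, W i j * s j)]
            congr 1; ext u
            simp only [hs, mul_ite, mul_one, mul_zero]
            rw [Finset.sum_ite_mem, Finset.univ_inter]
    rw [hexp]
    have : (0:ℝ) ≤ ∑ u ∈ S, ∑ v ∈ S, W u v :=
      Finset.sum_nonneg fun u _ => Finset.sum_nonneg fun v _ => hWnonneg u v
    linarith
  -- total energy
  have henergy : (∑ ℓ, c ℓ ^ 2) = (m : ℝ) := by
    calc (∑ ℓ, c ℓ ^ 2) = ∑ ℓ, ∑ i, c ℓ * U i ℓ * s i := by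
          congr 1; ext ℓ
          rw [sq]
          nth_rewrite 2 [hc ℓ]
          rw [Finset.mul_sum]
          congr 1; ext i; ring
      _ = ∑ i, (∑ ℓ, c ℓ * U i ℓ) * s i := by
          rw [Finset.sum_comm]; congr 1; ext i; rw [Finset.sum_mul]
      _ = ∑ i, s i * s i := by simp only [hs_expand]
      _ = (m : ℝ) := by simp only [hs01]; exact hsum_s
  -- the DC component
  have hsqrtN : Real.sqrt N * Real.sqrt N = N := Real.mul_self_sqrt (le_of_lt hN0)
  have hsqrtN0 : Real.sqrt N ≠ 0 := by positivity
  have hc0 : c e0 ^ 2 = (m : ℝ) ^ 2 / N := by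
    have : c e0 = (m : ℝ) / Real.sqrt N := by
      rw [hc e0]
      simp only [hU0]
      rw [← Finset.mul_sum, hsum_s]
      ring
    rw [this, div_pow]
    congr 1
    rw [sq, hsqrtN]
  -- energy in nonzero modes
  set T : ℝ := ∑ ℓ ∈ Finset.univ.erase e0, c ℓ ^ 2 with hT
  have hTval : T = (m : ℝ) - (m : ℝ) ^ 2 / N := by
    have := Finset.add_sum_erase Finset.univ (fun ℓ => c ℓ ^ 2) (Finset.mem_univ e0)
    rw [hT]
    have h2 : c e0 ^ 2 + T = (m : ℝ) := by rw [hT, this, henergy]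
    rw [hc0] at h2
    linarith
  have hTform : T = (m : ℝ) * (1 - (m : ℝ) / N) := by
    rw [hTval]; field_simp
  have hTpos : 0 < T := by
    rw [hTform]
    have h1 : (m : ℝ) / N < 1 := by
      rw [div_lt_one hN0]
      exact_mod_cast hmN
    have h2 : (0:ℝ) < m := by exact_mod_cast hm0
    nlinarith
  -- positivity of μ on erase set
  have hμpos : ∀ ℓ ∈ Finset.univ.erase e0, 0 < μ ℓ := by
    intro ℓ hℓ
    have hne : ℓ ≠ e0 := Finset.ne_of_mem_erase hℓ
    have h1 : e1 ≤ ℓ := by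
      have : (1 : ℕ) ≤ ℓ.val := by
        rcases Nat.eq_zero_or_pos ℓ.val with h | h
        · exact absurd (Fin.ext h) hne
        · exact h
      exact this
    exact lt_of_lt_of_le hμ2 (hμmono h1)
  -- Q > 0
  set Q : ℝ := ∑ ℓ ∈ Finset.univ.erase e0, c ℓ ^ 2 / μ ℓ with hQ
  have hQpos : 0 < Q := by
    have hex : ∃ ℓ ∈ Finset.univ.erase e0, 0 < c ℓ ^ 2 := by
      by_contra h
      push_neg at h
      have : T ≤ 0 := Finset.sum_nonpos h
      linarith
    obtain ⟨ℓ0, hℓ0, hc0pos⟩ := hex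
    refine Finset.sum_pos' (fun ℓ hℓ => div_nonneg (sq_nonneg _) (le_of_lt (hμpos ℓ hℓ))) ?_
    exact ⟨ℓ0, hℓ0, div_pos hc0pos (hμpos ℓ0 hℓ0)⟩
  -- Cauchy-Schwarz
  set A : ℝ := ∑ ℓ ∈ Finset.univ.erase e0, μ ℓ * c ℓ ^ 2 with hA
  have hCS : T ^ 2 ≤ A * Q := by
    have := Finset.sum_mul_sq_le_sq_mul_sq (Finset.univ.erase e0)
      (fun ℓ => Real.sqrt (μ ℓ) * c ℓ) (fun ℓ => c ℓ / Real.sqrt (μ ℓ))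
    have hfg : (∑ ℓ ∈ Finset.univ.erase e0,
        (Real.sqrt (μ ℓ) * c ℓ) * (c ℓ / Real.sqrt (μ ℓ))) = T := by
      rw [hT]
      refine Finset.sum_congr rfl fun ℓ hℓ => ?_
      have hμℓ : 0 < μ ℓ := hμpos ℓ hℓ
      have hsq : Real.sqrt (μ ℓ) ≠ 0 := by positivity
      field_simp
    have hf2 : (∑ ℓ ∈ Finset.univ.erase e0, (Real.sqrt (μ ℓ) * c ℓ) ^ 2) = A := by
      rw [hA]
      refine Finset.sum_congr rfl fun ℓ hℓ => ?_
      rw [mul_pow, Real.sq_sqrt (le_of_lt (hμpos ℓ hℓ))]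
    have hg2 : (∑ ℓ ∈ Finset.univ.erase e0, (c ℓ / Real.sqrt (μ ℓ)) ^ 2) = Q := by
      rw [hQ]
      refine Finset.sum_congr rfl fun ℓ hℓ => ?_
      rw [div_pow, Real.sq_sqrt (le_of_lt (hμpos ℓ hℓ))]
    rw [hfg, hf2, hg2] at this
    exact this
  -- A equals the full spectral sum, hence A ≤ vol
  have hA_eq : A = ∑ ℓ, μ ℓ * c ℓ ^ 2 := by
    rw [hA, ← Finset.add_sum_erase Finset.univ (fun ℓ => μ ℓ * c ℓ ^ 2) (Finset.mem_univ e0)]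
    simp [hμ0]
  have hA_le : A ≤ ∑ u ∈ S, ∑ v, W u v := by
    rw [hA_eq, ← hQF]
    exact hQF_le
  -- conclude
  have hgoal : (m : ℝ) ^ 2 * (1 - (m : ℝ) / N) ^ 2 = T ^ 2 := by
    rw [hTform]; ring
  rw [ge_iff_le, hgoal, div_le_iff₀ hQpos]
  calc T ^ 2 ≤ A * Q := hCS
    _ ≤ (∑ u ∈ S, ∑ v, W u v) * Q := by
        exact mul_le_mul_of_nonneg_right hA_le (le_of_lt hQpos)
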